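/- Let X be a quasi-Polish space and f : X → Y a continuous open surjection onto a T0 topological space Y. Then Y is quasi-Polish. -/

import Mathlib

open TopologicalSpace Set Topology

/-- A Π⁰₂ set: a countable intersection of sets of the form (complement of open) ∪ open. -/
def IsPi02 {X : Type*} [TopologicalSpace X] (s : Set X) : Prop :=
  ∃ U V : ℕ → Set X, (∀ n, IsOpen (U n)) ∧ (∀ n, IsOpen (V n)) ∧
    s = ⋂ n, ((U n)ᶜ ∪ V n)

/-- A quasi-Polish space: homeomorphic to a Π⁰₂ subspace of 𝕊^ℕ,
where 𝕊 is the Sierpiński space (`Prop` with its topology in Mathlib). -/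
def QuasiPolish (X : Type*) [TopologicalSpace X] : Prop :=
  ∃ s : Set (ℕ → Prop), IsPi02 s ∧ Nonempty (X ≃ₜ s)

/-! Write `s = ⋂ₙ (Uₙᶜ ∪ Vₙ) ⊆ 𝕊^ℕ` for a copy of `X` and `[F] = {p | ∀ i ∈ F, p i}` for finite
`F ⊆ ℕ`. Since `f` is open, continuous and surjective, the sets `W F = f '' (s ∩ [F])` form a
countable basis of `Y`, so `y ↦ (F ↦ y ∈ W F)` embeds the T0 space `Y` into `𝕊^(Finset ℕ)`.
Its range is cut out by countably many conditions "open → open": `∅` is coded, codes are upward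
closed along `W G ⊆ W F`, two coded sets have a coded common refinement, and every coded `K` with
`[K] ⊆ Uₙ` has a coded extension `H` with `[H] ⊆ Vₙ`. Conversely, a code `q` satisfying them
yields, by a Rasiowa–Sikorski argument, an increasing chain of coded finite sets meeting every
requirement infinitely often; its union is a point of `s` whose image is coded by `q`. -/

section Pi02

variable {X : Type*} [TopologicalSpace X]

theorem isPi02_iInter_compl_union {ι : Type*} [Countable ι] {U V : ι → Set X}
    (hU : ∀ i, IsOpen (U i)) (hV : ∀ i, IsOpen (V i)) : IsPi02 (⋂ i, ((U i)ᶜ ∪ V i)) := by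
  rcases isEmpty_or_nonempty ι with _ | _
  · exact ⟨fun _ => ∅, fun _ => ∅, fun _ => isOpen_empty, fun _ => isOpen_empty, by simp⟩
  · obtain ⟨e, he⟩ := exists_surjective_nat ι
    exact ⟨U ∘ e, V ∘ e, fun _ => hU _, fun _ => hV _, (he.iInter_comp _).symm⟩

theorem IsPi02.iInter {ι : Type*} [Countable ι] {s : ι → Set X} (hs : ∀ i, IsPi02 (s i)) :
    IsPi02 (⋂ i, s i) := by
  choose U V hU hV hs using hs
  convert isPi02_iInter_compl_union (ι := ι × ℕ) (fun p => hU p.1 p.2) (fun p => hV p.1 p.2)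
    using 1
  ext
  simp [hs, Prod.forall]

theorem IsPi02.inter {s t : Set X} (hs : IsPi02 s) (ht : IsPi02 t) : IsPi02 (s ∩ t) := by
  rw [inter_eq_iInter]
  exact IsPi02.iInter fun b => by cases b <;> assumption

theorem IsOpen.isPi02 {s : Set X} (hs : IsOpen s) : IsPi02 s :=
  ⟨fun _ => univ, fun _ => s, fun _ => isOpen_univ, fun _ => hs, by
    simp only [compl_univ, empty_union, iInter_const]⟩

theorem isPi02_setOf_imp {p q : X → Prop} (hp : IsOpen {x | p x}) (hq : IsOpen {x | q x}) :
    IsPi02 {x | p x → q x} := by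
  convert isPi02_iInter_compl_union (ι := Unit) (fun _ => hp) (fun _ => hq) using 1
  ext
  simp [imp_iff_not_or]

theorem IsPi02.preimage {Z : Type*} [TopologicalSpace Z] {f : Z → X} (hf : Continuous f)
    {s : Set X} (hs : IsPi02 s) : IsPi02 (f ⁻¹' s) := by
  obtain ⟨U, V, hU, hV, rfl⟩ := hs
  exact ⟨fun n => f ⁻¹' U n, fun n => f ⁻¹' V n, fun n => (hU n).preimage hf,
    fun n => (hV n).preimage hf, by simp [preimage_iInter]⟩

end Pi02

theorem Order.exists_monotone_frequently {P ι : Type*} [Preorder P] [Nonempty P] [Encodable ι]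
    {R : ι → P → Prop} (hR : ∀ i x, ∃ y, x ≤ y ∧ R i y) :
    ∃ u : ℕ → P, Monotone u ∧ ∀ i, ∃ᶠ m in Filter.atTop, R i (u m) := by
  -- Every requirement is repeated once for each `k : ℕ`, and copy `k` is met after stage `k`.
  let D : ι × ℕ → Cofinal P := fun j =>
    ⟨{y | R j.1 y}, fun x => (hR j.1 x).imp fun _ hy => ⟨hy.2, hy.1⟩⟩
  let u := sequenceOfCofinals (Classical.arbitrary P) D
  refine ⟨u, sequenceOfCofinals.monotone _ D, fun i => Filter.frequently_atTop.2 fun k =>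
    ⟨Encodable.encode (i, k) + 1, ?_, sequenceOfCofinals.encode_mem _ D (i, k)⟩⟩
  have := Nat.right_le_pair (Encodable.encode i) k
  rw [Encodable.encode_prod_val, Encodable.encode_nat]
  omega

theorem TopologicalSpace.IsTopologicalBasis.isInducing_mem {Y ι : Type*}
    [TopologicalSpace Y] {W : ι → Set Y} (hW : IsTopologicalBasis (range W)) :
    IsInducing fun y i => y ∈ W i := by
  convert inducing_iInf_to_pi fun i y => y ∈ W i
  refine le_antisymm (le_iInf fun i => ?_) ?_
  · exact (isOpen_iff_continuous_mem.mp (hW.isOpen ⟨i, rfl⟩)).le_induced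
  · rw [hW.eq_generateFrom]
    refine le_generateFrom ?_
    rintro _ ⟨i, rfl⟩
    exact TopologicalSpace.le_def.mp (iInf_le _ i) _
      (isOpen_induced_iff.mpr ⟨{True}, isOpen_singleton_true, by ext; simp⟩)

namespace QuasiPolish

theorem of_isEmbedding {Y ι : Type*} [TopologicalSpace Y] [Denumerable ι]
    {g : Y → (ι → Prop)} (hg : IsEmbedding g) (hrange : IsPi02 (range g)) : QuasiPolish Y := by
  let E : (ℕ → Prop) ≃ₜ (ι → Prop) :=
    Homeomorph.piCongrLeft (Y := fun _ => Prop) (Denumerable.eqv ι).symm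
  refine ⟨range (E.symm ∘ g), ?_, ⟨(E.symm.isEmbedding.comp hg).toHomeomorph⟩⟩
  rw [range_comp, E.image_symm]
  exact hrange.preimage E.continuous

section Sierpinski

variable {ι : Type*}

def basicOpen (F : Finset ι) : Set (ι → Prop) := {p | ∀ i ∈ F, p i}

theorem basicOpen_empty : basicOpen (∅ : Finset ι) = univ := by
  simp [basicOpen]

theorem basicOpen_union [DecidableEq ι] (F G : Finset ι) :
    basicOpen (F ∪ G) = basicOpen F ∩ basicOpen G := by
  ext p
  simp [basicOpen, or_imp, forall_and]

theorem basicOpen_anti {F G : Finset ι} (h : F ⊆ G) : basicOpen G ⊆ basicOpen F :=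
  fun _ hp i hi => hp i (h hi)

theorem isOpen_setOf_apply (i : ι) : IsOpen {p : ι → Prop | p i} :=
  continuous_Prop.mp (continuous_apply i)

theorem isOpen_setOf_exists_and_apply (R : ι → Prop) : IsOpen {p : ι → Prop | ∃ i, R i ∧ p i} := by
  rw [ofPred_exists]
  exact isOpen_iUnion fun i => isOpen_const.inter (isOpen_setOf_apply i)

theorem isOpen_basicOpen (F : Finset ι) : IsOpen (basicOpen F) := by
  simpa only [basicOpen, ofPred_forall] using
    isOpen_biInter_finset fun i _ => isOpen_setOf_apply (ι := ι) i

theorem isTopologicalBasis_basicOpen :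
    IsTopologicalBasis (range (basicOpen : Finset ι → Set (ι → Prop))) := by
  classical
  refine isTopologicalBasis_of_isOpen_of_nhds (by rintro _ ⟨F, rfl⟩; exact isOpen_basicOpen F) ?_
  intro p O hpO hO
  obtain ⟨J, u, hu, hJO⟩ := isOpen_pi_iff.mp hO p hpO
  refine ⟨_, ⟨J.filter p, rfl⟩, fun i hi => (Finset.mem_filter.mp hi).2, fun q hq => hJO ?_⟩
  -- The open sets of Sierpiński space are upward closed.
  intro i hi
  exact Topology.IsUpperSet.isOpen_iff_isUpperSet.mp (hu i hi).1
    (fun hpi => hq i (Finset.mem_filter.mpr ⟨hi, hpi⟩)) (hu i hi).2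

theorem exists_superset_basicOpen_subset {p : ι → Prop} {K : Finset ι} (hpK : p ∈ basicOpen K)
    {O : Set (ι → Prop)} (hO : IsOpen O) (hpO : p ∈ O) :
    ∃ H, K ⊆ H ∧ p ∈ basicOpen H ∧ basicOpen H ⊆ O := by
  classical
  obtain ⟨_, ⟨G, rfl⟩, hpG, hGO⟩ := isTopologicalBasis_basicOpen.exists_subset_of_mem_open hpO hO
  refine ⟨K ∪ G, Finset.subset_union_left, ?_, ?_⟩ <;> rw [basicOpen_union]
  exacts [⟨hpK, hpG⟩, inter_subset_right.trans hGO]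

theorem exists_basicOpen_subset_of_monotone {K : ℕ → Finset ι} (hK : Monotone K)
    {O : Set (ι → Prop)} (hO : IsOpen O) (hpO : (fun i => ∃ m, i ∈ K m) ∈ O) :
    ∃ m, basicOpen (K m) ⊆ O := by
  obtain ⟨_, ⟨F, rfl⟩, hpF, hFO⟩ := isTopologicalBasis_basicOpen.exists_subset_of_mem_open hpO hO
  have hdir : Directed (· ⊆ ·) fun m => (K m : Set ι) :=
    Monotone.directed_le fun _ _ h => Finset.coe_subset.mpr (hK h)
  obtain ⟨m, hm⟩ := hdir.exists_mem_subset_of_finset_subset_biUnion (s := F)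
    fun i hi => mem_iUnion.mpr (hpF i hi)
  exact ⟨m, (basicOpen_anti hm).trans hFO⟩

end Sierpinski

section Code

variable {Y : Type*} {s : Set (ℕ → Prop)} (f : s → Y)

def imageBasic (F : Finset ℕ) : Set Y := f '' (Subtype.val ⁻¹' basicOpen F)

def code (y : Y) (F : Finset ℕ) : Prop := y ∈ imageBasic f F

def admissibleCodes (U V : ℕ → Set (ℕ → Prop)) : Set (Finset ℕ → Prop) :=
  {q | q ∅ ∧ (∀ G F, q G ∧ imageBasic f G ⊆ imageBasic f F → q F) ∧
    (∀ K F, q K ∧ q F → ∃ H, (K ⊆ H ∧ imageBasic f H ⊆ imageBasic f F) ∧ q H) ∧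
    (∀ n K, q K ∧ basicOpen K ⊆ U n → ∃ H, (K ⊆ H ∧ basicOpen H ⊆ V n) ∧ q H)}

theorem isPi02_admissibleCodes (U V : ℕ → Set (ℕ → Prop)) : IsPi02 (admissibleCodes f U V) := by
  simp only [admissibleCodes, ofPred_and, ofPred_forall]
  refine (isOpen_setOf_apply ∅).isPi02.inter (IsPi02.inter ?_ (IsPi02.inter ?_ ?_))
  · exact IsPi02.iInter fun G => IsPi02.iInter fun F => isPi02_setOf_imp
      ((isOpen_setOf_apply G).inter isOpen_const) (isOpen_setOf_apply F)
  · exact IsPi02.iInter fun K => IsPi02.iInter fun F => isPi02_setOf_imp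
      ((isOpen_setOf_apply K).inter (isOpen_setOf_apply F)) (isOpen_setOf_exists_and_apply _)
  · exact IsPi02.iInter fun n => IsPi02.iInter fun K => isPi02_setOf_imp
      ((isOpen_setOf_apply K).inter isOpen_const) (isOpen_setOf_exists_and_apply _)

variable {f} {U V : ℕ → Set (ℕ → Prop)}

theorem exists_chain_of_mem_admissibleCodes {q : Finset ℕ → Prop}
    (hq : q ∈ admissibleCodes f U V) :
    ∃ K : ℕ → Finset ℕ, Monotone K ∧ (∀ m, q (K m)) ∧
      (∀ n, ∃ᶠ m in Filter.atTop, basicOpen (K m) ⊆ U n → basicOpen (K m) ⊆ V n) ∧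
      ∀ F, q F → ∃ m, imageBasic f (K m) ⊆ imageBasic f F := by
  obtain ⟨hq0, -, hrefine, hextend⟩ := hq
  have : Nonempty {K // q K} := ⟨⟨∅, hq0⟩⟩
  let R : ℕ ⊕ Finset ℕ → {K // q K} → Prop := Sum.elim
    (fun n H => basicOpen H.1 ⊆ U n → basicOpen H.1 ⊆ V n)
    (fun F H => q F → imageBasic f H.1 ⊆ imageBasic f F)
  have hR : ∀ i K, ∃ H, K ≤ H ∧ R i H := by
    rintro (n | F) K
    · by_cases hKU : basicOpen K.1 ⊆ U n
      · obtain ⟨H, ⟨hKH, hHV⟩, hqH⟩ := hextend n K.1 ⟨K.2, hKU⟩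
        exact ⟨⟨H, hqH⟩, hKH, fun _ => hHV⟩
      · exact ⟨K, le_rfl, fun h => absurd h hKU⟩
    · by_cases hqF : q F
      · obtain ⟨H, ⟨hKH, hHF⟩, hqH⟩ := hrefine K.1 F ⟨K.2, hqF⟩
        exact ⟨⟨H, hqH⟩, hKH, fun _ => hHF⟩
      · exact ⟨K, le_rfl, fun h => absurd h hqF⟩
  obtain ⟨u, hu, hfreq⟩ := Order.exists_monotone_frequently hR
  exact ⟨fun m => (u m).1, fun _ _ h => hu h, fun m => (u m).2, fun n => hfreq (.inl n),
    fun F hqF => (hfreq (.inr F)).exists.imp fun _ h => h hqF⟩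

variable [TopologicalSpace Y]

theorem isOpen_imageBasic (ho : IsOpenMap f) (F : Finset ℕ) : IsOpen (imageBasic f F) :=
  ho _ ((isOpen_basicOpen F).preimage continuous_subtype_val)

theorem isTopologicalBasis_imageBasic (hc : Continuous f) (ho : IsOpenMap f)
    (hsurj : Function.Surjective f) : IsTopologicalBasis (range (imageBasic f)) := by
  have := (isTopologicalBasis_basicOpen.isInducing IsInducing.subtypeVal).isQuotientMap
    (ho.isQuotientMap hc hsurj) ho
  rwa [← range_comp, ← range_comp] at this

theorem isEmbedding_code [T0Space Y] (hc : Continuous f) (ho : IsOpenMap f)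
    (hsurj : Function.Surjective f) : IsEmbedding (code f) :=
  (isTopologicalBasis_imageBasic hc ho hsurj).isInducing_mem.isEmbedding

theorem exists_superset_imageBasic_subset (hc : Continuous f) {x : s} {K : Finset ℕ}
    (hxK : x.1 ∈ basicOpen K) {O : Set Y} (hO : IsOpen O) (hxO : f x ∈ O) :
    ∃ H, K ⊆ H ∧ x.1 ∈ basicOpen H ∧ imageBasic f H ⊆ O := by
  obtain ⟨O', hO', hpre⟩ := isOpen_induced_iff.mp (hO.preimage hc)
  obtain ⟨H, hKH, hxH, hHO⟩ := exists_superset_basicOpen_subset hxK hO'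
    (show x ∈ Subtype.val ⁻¹' O' from hpre ▸ hxO)
  exact ⟨H, hKH, hxH, image_subset_iff.mpr (hpre ▸ preimage_mono hHO)⟩

theorem code_mem_admissibleCodes (hc : Continuous f) (ho : IsOpenMap f)
    (hsurj : Function.Surjective f) (hV : ∀ n, IsOpen (V n)) (hs : s = ⋂ n, ((U n)ᶜ ∪ V n))
    (y : Y) : code f y ∈ admissibleCodes f U V := by
  refine ⟨?_, fun G F ⟨hG, hGF⟩ => hGF hG, ?_, ?_⟩
  · obtain ⟨x, rfl⟩ := hsurj y
    exact ⟨x, by simp [basicOpen_empty], rfl⟩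
  · rintro K F ⟨⟨x, hxK, rfl⟩, hxF⟩
    obtain ⟨H, hKH, hxH, hHF⟩ :=
      exists_superset_imageBasic_subset hc hxK (isOpen_imageBasic ho F) hxF
    exact ⟨H, ⟨hKH, hHF⟩, x, hxH, rfl⟩
  · rintro n K ⟨⟨x, hxK, rfl⟩, hKU⟩
    have hxs : x.1 ∈ ⋂ n, ((U n)ᶜ ∪ V n) := hs ▸ x.2
    have hxV : x.1 ∈ V n := (mem_iInter.mp hxs n).resolve_left (not_not.mpr (hKU hxK))
    obtain ⟨H, hKH, hxH, hHV⟩ := exists_superset_basicOpen_subset hxK (hV n) hxV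
    exact ⟨H, ⟨hKH, hHV⟩, x, hxH, rfl⟩

theorem mem_range_code_of_mem_admissibleCodes (hc : Continuous f) (ho : IsOpenMap f)
    (hU : ∀ n, IsOpen (U n)) (hs : s = ⋂ n, ((U n)ᶜ ∪ V n)) {q : Finset ℕ → Prop}
    (hq : q ∈ admissibleCodes f U V) : q ∈ range (code f) := by
  obtain ⟨K, hK, hqK, hKV, hKW⟩ := exists_chain_of_mem_admissibleCodes hq
  set p : ℕ → Prop := fun i => ∃ m, i ∈ K m
  have hpK : ∀ m, p ∈ basicOpen (K m) := fun m i hi => ⟨m, hi⟩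
  have hps : p ∈ s := by
    refine hs ▸ mem_iInter.mpr fun n => or_iff_not_imp_left.mpr fun hpU => ?_
    obtain ⟨k, hk⟩ := exists_basicOpen_subset_of_monotone hK (hU n) (not_not.mp hpU)
    obtain ⟨m, hkm, hm⟩ := Filter.frequently_atTop.mp (hKV n) k
    exact hm ((basicOpen_anti (hK hkm)).trans hk) (hpK m)
  refine ⟨f ⟨p, hps⟩, funext fun F => propext ⟨fun hpF => ?_, fun hqF => ?_⟩⟩
  · obtain ⟨O, hO, hpre⟩ := isOpen_induced_iff.mp ((isOpen_imageBasic ho F).preimage hc)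
    obtain ⟨m, hm⟩ := exists_basicOpen_subset_of_monotone hK hO
      (show (⟨p, hps⟩ : s) ∈ Subtype.val ⁻¹' O from hpre ▸ hpF)
    exact hq.2.1 (K m) F ⟨hqK m, image_subset_iff.mpr (hpre ▸ preimage_mono hm)⟩
  · obtain ⟨m, hm⟩ := hKW F hqF
    exact hm ⟨⟨p, hps⟩, hpK m, rfl⟩

theorem range_code (hc : Continuous f) (ho : IsOpenMap f) (hsurj : Function.Surjective f)
    (hU : ∀ n, IsOpen (U n)) (hV : ∀ n, IsOpen (V n)) (hs : s = ⋂ n, ((U n)ᶜ ∪ V n)) :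
    range (code f) = admissibleCodes f U V :=
  (range_subset_iff.mpr (code_mem_admissibleCodes hc ho hsurj hV hs)).antisymm
    fun _ hq => mem_range_code_of_mem_admissibleCodes hc ho hU hs hq

end Code

end QuasiPolish

theorem quasiPolish_of_open_surjection {X Y : Type*} [TopologicalSpace X]
    [TopologicalSpace Y] [T0Space Y] (hX : QuasiPolish X) (f : X → Y)
    (hc : Continuous f) (ho : IsOpenMap f) (hs : Function.Surjective f) :
    QuasiPolish Y := by
  obtain ⟨s, ⟨U, V, hU, hV, hsUV⟩, ⟨e⟩⟩ := hX
  have hgc : Continuous (f ∘ e.symm) := hc.comp e.symm.continuous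
  have hgo : IsOpenMap (f ∘ e.symm) := ho.comp e.symm.isOpenMap
  have hgs : Function.Surjective (f ∘ e.symm) := hs.comp e.symm.surjective
  refine QuasiPolish.of_isEmbedding (QuasiPolish.isEmbedding_code hgc hgo hgs) ?_
  rw [QuasiPolish.range_code hgc hgo hgs hU hV hsUV]
  exact QuasiPolish.isPi02_admissibleCodes _ U V
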